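/- Consider the input-free simplified RDN system τ·dR_i/dt = −R_i + β·R_i/(η + G), τ·dG/dt = −G + ∑_{j=1}^N R_j with τ > 0 and β > η > 0, and let (R*, G*) be any point of the continuous attractor, i.e. G* = β − η and ∑_{i=1}^N R_i* = β − η. Then the Jacobian J of the vector field at (R*, G*) has characteristic polynomial χ_J(X) = X^{N−1} · (X² + X/τ + (β − η)/(β·τ²)); equivalently, its eigenvalues are 0 with multiplicity N − 1 together with λ_{N,N+1} = (−1 ± √(4η/β − 3))/(2τ). -/

import Mathlib

open Polynomial

/-- The vector field of the input-free simplified RDN system on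
`(R_1, …, R_N, G)`: `dR_i/dt = (-R_i + β R_i/(η + G))/τ`,
`dG/dt = (-G + ∑_j R_j)/τ`. -/
noncomputable def rdnField (N : ℕ) (τ β η : ℝ) (x : (Fin N ⊕ Unit) → ℝ) :
    (Fin N ⊕ Unit) → ℝ :=
  fun i => match i with
  | Sum.inl i => (-x (Sum.inl i) + β * x (Sum.inl i) / (η + x (Sum.inr ()))) / τ
  | Sum.inr _ => (-x (Sum.inr ()) + ∑ j, x (Sum.inl j)) / τ

/-- The Jacobian matrix of `F` at `p`: the matrix of partial derivatives of
the components of `F` with respect to the coordinates. -/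
noncomputable def jacobian {n : Type*} [Fintype n] [DecidableEq n]
    (F : (n → ℝ) → n → ℝ) (p : n → ℝ) : Matrix n n ℝ :=
  Matrix.of fun i j => fderiv ℝ (fun x => F x i) p (Pi.single j 1)

/-!
On the attractor the gain `(-1 + β/(η + G))/τ` of every `R_i` vanishes, so the Jacobian is the
bordered matrix `[[0, u], [1ᵀ/τ, -1/τ]]` with `u_i = -R_i/(βτ)`. A Schur complement with respect
to the zero block gives `χ(X) · X = X^N · (X (X + 1/τ) - (1/τ) ∑ u_i)`, and `∑ R_i = β - η` turns
the constant term into `(β - η)/(βτ²)`.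
-/

namespace Matrix

variable {m n R : Type*} [Fintype m] [DecidableEq m] [Fintype n] [DecidableEq n] [CommRing R]

/- The Schur complement formula, in a form that does not need `x` to be invertible (it is used
with `x = X` in `R[X]`). -/
theorem det_fromBlocks_scalar_mul_pow (x : R) (B : Matrix m n R) (C : Matrix n m R)
    (D : Matrix n n R) :
    (fromBlocks (scalar m x) B C D).det * x ^ Fintype.card n =
      x ^ Fintype.card m * (x • D - C * B).det := by
  have hmul : fromBlocks (scalar m x) B C D * fromBlocks 1 (-B) 0 (scalar n x) =
      fromBlocks (scalar m x) 0 C (x • D - C * B) := by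
    rw [fromBlocks_multiply]
    simp [scalar_apply, ← smul_eq_diagonal_mul, ← smul_eq_mul_diagonal, sub_eq_neg_add]
  simpa [scalar_apply, det_diagonal, det_fromBlocks_zero₂₁, det_fromBlocks_zero₁₂]
    using congrArg det hmul

theorem charpoly_fromBlocks_zero₁₁_mul_X_pow (B : Matrix m n R) (C : Matrix n m R)
    (D : Matrix n n R) :
    (fromBlocks 0 B C D).charpoly * X ^ Fintype.card n =
      X ^ Fintype.card m *
        ((X : R[X]) • D.charmatrix - C.map Polynomial.C * B.map Polynomial.C).det := by
  rw [charpoly, charmatrix_fromBlocks, charmatrix_zero, det_fromBlocks_scalar_mul_pow,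
    Matrix.neg_mul, Matrix.mul_neg, neg_neg]

end Matrix

theorem jacobian_apply_of_hasFDerivAt {n : Type*} [Fintype n] [DecidableEq n]
    {F : (n → ℝ) → n → ℝ} {p : n → ℝ} {i : n} {L : (n → ℝ) →L[ℝ] ℝ}
    (h : HasFDerivAt (fun x => F x i) L p) (j : n) :
    jacobian F p i j = L (Pi.single j 1) := by
  rw [jacobian, Matrix.of_apply, h.fderiv]

noncomputable def rdnGain (τ β η G : ℝ) : ℝ :=
  (-1 + β / (η + G)) / τ

section RDN

variable {N : ℕ} {τ β η : ℝ}

theorem rdnField_inl (x : (Fin N ⊕ Unit) → ℝ) (i : Fin N) :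
    rdnField N τ β η x (Sum.inl i) = x (Sum.inl i) * rdnGain τ β η (x (Sum.inr ())) := by
  simp only [rdnField, rdnGain]
  ring

theorem rdnGain_eq_zero {G : ℝ} (hden : η + G = β) (hβ : β ≠ 0) :
    rdnGain τ β η G = 0 := by
  rw [rdnGain, hden, div_self hβ, neg_add_cancel, zero_div]

theorem hasDerivAt_rdnGain {G : ℝ} (hden : η + G ≠ 0) :
    HasDerivAt (rdnGain τ β η) (-β / (η + G) ^ 2 / τ) G := by
  have h := (((hasDerivAt_const G β).fun_div ((hasDerivAt_id' G).const_add η) hden).const_add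
    (-1)).div_const τ
  exact h.congr_deriv (by ring)

theorem hasFDerivAt_rdnField_inl {p : (Fin N ⊕ Unit) → ℝ} (hden : η + p (Sum.inr ()) ≠ 0)
    (i : Fin N) :
    HasFDerivAt (fun x => rdnField N τ β η x (Sum.inl i))
      (p (Sum.inl i) • (-β / (η + p (Sum.inr ())) ^ 2 / τ) •
          ContinuousLinearMap.proj (R := ℝ) (φ := fun _ : Fin N ⊕ Unit => ℝ) (Sum.inr ()) +
        rdnGain τ β η (p (Sum.inr ())) •
          ContinuousLinearMap.proj (R := ℝ) (φ := fun _ : Fin N ⊕ Unit => ℝ) (Sum.inl i)) p := by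
  have h := (hasFDerivAt_apply (𝕜 := ℝ) (Sum.inl i) p).fun_mul
    ((hasDerivAt_rdnGain (τ := τ) (β := β) hden).comp_hasFDerivAt p
      (hasFDerivAt_apply (Sum.inr ()) p))
  simpa only [rdnField_inl, Function.comp_apply] using h

theorem hasFDerivAt_rdnField_inr (p : (Fin N ⊕ Unit) → ℝ) :
    HasFDerivAt (fun x => rdnField N τ β η x (Sum.inr ()))
      (τ⁻¹ •
        (-ContinuousLinearMap.proj (R := ℝ) (φ := fun _ : Fin N ⊕ Unit => ℝ) (Sum.inr ()) +
          ∑ j, ContinuousLinearMap.proj (R := ℝ) (φ := fun _ : Fin N ⊕ Unit => ℝ) (Sum.inl j)))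
      p := by
  convert ContinuousLinearMap.hasFDerivAt _ using 1
  ext x
  simp [rdnField, div_eq_inv_mul, mul_add]

theorem jacobian_rdnField_of_attractor {p : (Fin N ⊕ Unit) → ℝ} (hG : p (Sum.inr ()) = β - η)
    (hβ : β ≠ 0) :
    jacobian (rdnField N τ β η) p =
      Matrix.fromBlocks 0 (Matrix.of fun i _ => -p (Sum.inl i) / (β * τ))
        (Matrix.of fun _ _ => 1 / τ) (Matrix.of fun _ _ => -1 / τ) := by
  have hden : η + p (Sum.inr ()) = β := by rw [hG]; ring
  have hinl := hasFDerivAt_rdnField_inl (τ := τ) (β := β) (hden ▸ hβ)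
  ext (i | i) (j | j)
  · rw [jacobian_apply_of_hasFDerivAt (hinl i)]
    simp [rdnGain_eq_zero hden hβ]
  · rw [jacobian_apply_of_hasFDerivAt (hinl i)]
    simp only [add_apply, smul_apply, ContinuousLinearMap.proj_apply, Pi.single_eq_same,
      smul_eq_mul, mul_one, ne_eq, reduceCtorEq, not_false_eq_true, Pi.single_eq_of_ne, mul_zero,
      add_zero, Matrix.fromBlocks_apply₁₂, Matrix.of_apply, hden]
    field_simp
  · rw [jacobian_apply_of_hasFDerivAt (hasFDerivAt_rdnField_inr p)]
    simp [Pi.single_apply]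
  · rw [jacobian_apply_of_hasFDerivAt (hasFDerivAt_rdnField_inr p)]
    simp only [smul_add, smul_neg, add_apply, neg_apply, smul_apply,
      ContinuousLinearMap.proj_apply, Pi.single_eq_same, smul_eq_mul, mul_one, sum_apply, ne_eq,
      reduceCtorEq, not_false_eq_true, Pi.single_eq_of_ne, Finset.sum_const_zero, mul_zero,
      add_zero, Matrix.fromBlocks_apply₂₂, Matrix.of_apply]
    ring

end RDN

theorem rdn_attractor_jacobian_charpoly_general (N : ℕ) (hN : 1 ≤ N) (τ β η : ℝ)
    (hη : 0 < η) (hβη : η < β)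
    (p : (Fin N ⊕ Unit) → ℝ)
    (hG : p (Sum.inr ()) = β - η)
    (hR : ∑ i, p (Sum.inl i) = β - η) :
    (jacobian (rdnField N τ β η) p).charpoly =
      X ^ (N - 1) *
        (X ^ 2 + C (1 / τ) * X + C ((β - η) / (β * τ ^ 2))) := by
  obtain ⟨M, rfl⟩ : ∃ M, N = M + 1 := ⟨N - 1, by omega⟩
  have hβ : β ≠ 0 := (hη.trans hβη).ne'
  have hsum : ∑ i, 1 / τ * (-p (Sum.inl i) / (β * τ)) = -((β - η) / (β * τ ^ 2)) := by
    rw [← Finset.mul_sum, ← Finset.sum_div, Finset.sum_neg_distrib, hR]; ring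
  have h := Matrix.charpoly_fromBlocks_zero₁₁_mul_X_pow
    (Matrix.of fun i (_ : Unit) => -p (Sum.inl i) / (β * τ)) (Matrix.of fun _ _ => 1 / τ)
    (Matrix.of fun _ _ => -1 / τ)
  rw [Fintype.card_unit, pow_one, Fintype.card_fin, Matrix.det_unique] at h
  rw [jacobian_rdnField_of_attractor hG hβ, Nat.add_sub_cancel]
  refine mul_right_cancel₀ X_ne_zero (h.trans ?_)
  simp only [Matrix.sub_apply, Matrix.smul_apply, Matrix.charmatrix_apply_eq, Matrix.mul_apply,
    Matrix.map_apply, Matrix.of_apply, ← map_mul, ← map_sum, hsum, smul_eq_mul]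
  rw [neg_div, map_neg, map_neg]
  ring

/-- At any point of the continuous attractor (`G* = β - η`,
`∑_i R_i* = β - η`) of the input-free simplified RDN system with `β > η`, the
Jacobian has characteristic polynomial
`X^(N-1) (X² + X/τ + (β - η)/(β τ²))`. -/
theorem rdn_attractor_jacobian_charpoly (N : ℕ) (hN : 1 ≤ N) (τ β η : ℝ)
    (hτ : 0 < τ) (hη : 0 < η) (hβη : η < β)
    (p : (Fin N ⊕ Unit) → ℝ)
    (hG : p (Sum.inr ()) = β - η)
    (hR : ∑ i, p (Sum.inl i) = β - η) :
    (jacobian (rdnField N τ β η) p).charpoly =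
      X ^ (N - 1) *
        (X ^ 2 + C (1 / τ) * X + C ((β - η) / (β * τ ^ 2))) :=
  rdn_attractor_jacobian_charpoly_general N hN τ β η hη hβη p hG hR
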